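/- arXiv:2307.09398 — 2 statements merged into one kernel-verified Lean document; each statement's English description precedes it below -/
import Mathlib

section
/- Consider the closed-loop system f on x = (δ, ζ, v_dc, i_d, i_q). Every equilibrium point (δ*, ζ*, v_dc*, i_d*, i_q*) of f (i.e. every point where f vanishes) satisfies: v_dc* = v_dcr; δ* = δ_r + 2πk for some integer k; i_d* = (μ v_dcr (R cos δ* − Lω₀ sin δ*) − R v_gd)/(R² + (Lω₀)²); i_q* = (μ v_dcr (Lω₀ cos δ* + R sin δ*) − Lω₀ v_gd)/(R² + (Lω₀)²); and ζ* = (−G_dc v_dcr − μ(i_d* cos δ* + i_q* sin δ*))/κ_i. -/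
open Real

/-! At an equilibrium the integrator equation forces `v_dc = v_dcr`, so the dc droop term in the
angle equation vanishes and `sin ((δ - δ_r) / 2) = 0`, i.e. `δ ≡ δ_r (mod 2π)`. The two current
equations are then a linear system with matrix `[[R, Lω₀], [-Lω₀, R]]`, of determinant
`R² + (Lω₀)² > 0`, and the dc-voltage equation is solved for `ζ`. -/

lemma exists_int_eq_add_two_pi_mul_of_sin_half_sub_eq_zero {x y : ℝ}
    (h : sin ((x - y) / 2) = 0) : ∃ k : ℤ, x = y + 2 * π * k := by
  obtain ⟨k, hk⟩ := sin_eq_zero_iff.mp h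
  exact ⟨k, by linarith⟩

/-- In complex form the hypotheses say `u = (R - iX) i`, so `i = u (R + iX) / (R² + X²)`. -/
lemma series_branch_currents_eq {R X u_d u_q i_d i_q : ℝ} (hD : R ^ 2 + X ^ 2 ≠ 0)
    (hd : u_d - R * i_d - X * i_q = 0) (hq : u_q - R * i_q + X * i_d = 0) :
    i_d = (R * u_d - X * u_q) / (R ^ 2 + X ^ 2) ∧
      i_q = (X * u_d + R * u_q) / (R ^ 2 + X ^ 2) := by
  constructor <;> rw [eq_div_iff hD]
  · linear_combination -(R * hd) + X * hq
  · linear_combination -(X * hd) - R * hq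

theorem stmt_1_general
    (L R Gdc κp κi κdc κac μ : ℝ)
    (hR : 0 < R)
    (hκi : 0 < κi) (hκac : 0 < κac)
    (ω₀ vgd vdcr δr : ℝ)
    (δs ζs vs ids iqs : ℝ)
    -- the five right-hand sides of the closed-loop ODE vanish at (δs, ζs, vs, ids, iqs)
    (h1 : κdc * (vs - vdcr) - κac * Real.sin ((δs - δr) / 2) = 0)
    (h2 : vs - vdcr = 0)
    (h3 : -(κp * (vs - vdcr)) - κi * ζs - Gdc * vs
          - μ * (ids * Real.cos δs + iqs * Real.sin δs) = 0)
    (h4 : μ * vs * Real.cos δs - R * ids - L * ω₀ * iqs - vgd = 0)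
    (h5 : μ * vs * Real.sin δs - R * iqs + L * ω₀ * ids = 0) :
    vs = vdcr ∧
    (∃ k : ℤ, δs = δr + 2 * Real.pi * (k : ℝ)) ∧
    ids = (μ * vdcr * (R * Real.cos δs - L * ω₀ * Real.sin δs) - R * vgd)
            / (R ^ 2 + (L * ω₀) ^ 2) ∧
    iqs = (μ * vdcr * (L * ω₀ * Real.cos δs + R * Real.sin δs) - L * ω₀ * vgd)
            / (R ^ 2 + (L * ω₀) ^ 2) ∧
    ζs = (-(Gdc * vdcr) - μ * (ids * Real.cos δs + iqs * Real.sin δs)) / κi := by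
  obtain rfl : vs = vdcr := sub_eq_zero.mp h2
  have hsin : sin ((δs - δr) / 2) = 0 := by
    simpa [hκac.ne'] using h1
  obtain ⟨hid, hiq⟩ := series_branch_currents_eq (R := R) (X := L * ω₀)
    (u_d := μ * vs * cos δs - vgd) (u_q := μ * vs * sin δs) (i_d := ids) (i_q := iqs)
    (by positivity) (by linear_combination h4) (by linear_combination h5)
  refine ⟨rfl, exists_int_eq_add_two_pi_mul_of_sin_half_sub_eq_zero hsin, ?_, ?_, ?_⟩
  · rw [hid]; ring
  · rw [hiq]; ring
  · rw [eq_div_iff hκi.ne']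
    linear_combination -h3

/-- every equilibrium point of the closed-loop converter dynamics under
hybrid angle control has dc voltage equal to its reference, relative angle equal to
δ_r + 2πk for some integer k, and the stated closed-form dq currents and integrator state. -/
theorem stmt_1
    (Cdc L R Gdc κp κi κdc κac μ : ℝ)
    (hCdc : 0 < Cdc) (hL : 0 < L) (hR : 0 < R) (hGdc : 0 < Gdc)
    (hκp : 0 < κp) (hκi : 0 < κi) (hκdc : 0 < κdc) (hκac : 0 < κac) (hμ : 0 < μ)
    (ω₀ vgd vdcr δr : ℝ)
    (δs ζs vs ids iqs : ℝ)
    -- the five right-hand sides of the closed-loop ODE vanish at (δs, ζs, vs, ids, iqs)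
    (h1 : κdc * (vs - vdcr) - κac * Real.sin ((δs - δr) / 2) = 0)
    (h2 : vs - vdcr = 0)
    (h3 : -(κp * (vs - vdcr)) - κi * ζs - Gdc * vs
          - μ * (ids * Real.cos δs + iqs * Real.sin δs) = 0)
    (h4 : μ * vs * Real.cos δs - R * ids - L * ω₀ * iqs - vgd = 0)
    (h5 : μ * vs * Real.sin δs - R * iqs + L * ω₀ * ids = 0) :
    vs = vdcr ∧
    (∃ k : ℤ, δs = δr + 2 * Real.pi * (k : ℝ)) ∧
    ids = (μ * vdcr * (R * Real.cos δs - L * ω₀ * Real.sin δs) - R * vgd)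
            / (R ^ 2 + (L * ω₀) ^ 2) ∧
    iqs = (μ * vdcr * (L * ω₀ * Real.cos δs + R * Real.sin δs) - L * ω₀ * vgd)
            / (R ^ 2 + (L * ω₀) ^ 2) ∧
    ζs = (-(Gdc * vdcr) - μ * (ids * Real.cos δs + iqs * Real.sin δs)) / κi :=
  stmt_1_general L R Gdc κp κi κdc κac μ hR hκi hκac ω₀ vgd vdcr δr δs ζs vs ids iqs h1 h2 h3 h4 h5
end

section
/- Let κ_ac > 0 and δ_r be real, and let δ : [0, ∞) → ℝ be a differentiable function satisfying dδ/dt (t) = −κ_ac sin((δ(t) − δ_r)/2) for all t ≥ 0 with initial condition δ(0) ∈ (δ_r − 2π, δ_r + 2π). Then δ(t) ∈ (δ_r − 2π, δ_r + 2π) for all t ≥ 0 and δ(t) → δ_r as t → ∞. -/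
/-!
With `x = δ - δ_r`, the square `V = x²` is a Lyapunov function: `V' = -2 κ_ac x sin (x / 2)`.
On a sublevel set `|x| ≤ b` with `b < 2π`, concavity of `sin` on `[0, π]` gives
`x sin (x / 2) ≥ (sin (b / 2) / b) x²`, so there `V' ≤ -k V` with `k > 0`. Fencing `V` by
`V(0) e^{-k t} + ε` keeps `V` inside the sublevel set for all time and yields exponential decay,
which gives both the invariance of the interval and the convergence.
-/

open Real Filter

theorem mul_sin_le_sin_mul {θ u : ℝ} (hθ₀ : 0 ≤ θ) (hθ₁ : θ ≤ 1) (hu₀ : 0 ≤ u) (hu : u ≤ π) :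
    θ * sin u ≤ sin (θ * u) := by
  simpa using strictConcaveOn_sin_Icc.concaveOn.2 ⟨le_rfl, pi_pos.le⟩ ⟨hu₀, hu⟩
    (sub_nonneg.2 hθ₁) hθ₀ (by ring)

theorem mul_sq_le_mul_sin_half {b y : ℝ} (hb₀ : 0 < b) (hb : b ≤ 2 * π) (hy : |y| ≤ b) :
    sin (b / 2) / b * y ^ 2 ≤ y * sin (y / 2) := by
  have h_even : y * sin (y / 2) = |y| * sin (|y| / 2) := by
    rcases abs_choice y with h | h <;> rw [h]
    rw [neg_div, sin_neg, neg_mul_neg]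
  have hθ : |y| / b * sin (b / 2) ≤ sin (|y| / b * (b / 2)) :=
    mul_sin_le_sin_mul (by positivity) ((div_le_one hb₀).2 hy) (by positivity) (by linarith)
  rw [show |y| / b * (b / 2) = |y| / 2 by field_simp] at hθ
  rw [h_even, ← sq_abs y]
  calc sin (b / 2) / b * |y| ^ 2 = |y| * (|y| / b * sin (b / 2)) := by ring
    _ ≤ |y| * sin (|y| / 2) := by gcongr

theorem le_mul_exp_neg_of_hasDerivAt_le_on_sublevel {V V' : ℝ → ℝ} {k c t : ℝ} (hk : 0 < k)
    (hV₀ : 0 ≤ V 0) (hc : V 0 < c) (hV : ∀ s, 0 ≤ s → HasDerivAt V (V' s) s)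
    (hdecay : ∀ s, 0 ≤ s → V s ≤ c → V' s ≤ -k * V s) (ht : 0 ≤ t) :
    V t ≤ V 0 * exp (-k * t) := by
  -- the margin `η > 0` makes the fence strict, as the fencing theorem requires
  refine le_of_forall_pos_le_add fun ε hε => ?_
  set η := min ε ((c - V 0) / 2)
  have hη : 0 < η := lt_min hε (by linarith)
  have hB : ∀ s, HasDerivAt (fun s => V 0 * exp (-k * s) + η) (-k * (V 0 * exp (-k * s))) s :=
    fun s => ((((hasDerivAt_id' s).const_mul (-k)).exp.const_mul (V 0)).add_const η).congr_deriv
      (by ring)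
  have hfence : V t ≤ V 0 * exp (-k * t) + η := by
    refine image_le_of_deriv_right_lt_deriv_boundary
      (fun s hs => (hV s hs.1).continuousAt.continuousWithinAt)
      (fun s hs => (hV s hs.1).hasDerivWithinAt)
      (by rw [mul_zero, exp_zero, mul_one]; linarith) hB ?_ ⟨ht, le_rfl⟩
    intro s hs hVs
    have hexp : exp (-k * s) ≤ 1 := exp_le_one_iff.2 (by nlinarith [hs.1])
    have hsub : V s ≤ c := by
      rw [hVs]; nlinarith [min_le_right ε ((c - V 0) / 2)]
    have := hdecay s hs.1 hsub
    rw [hVs] at this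
    nlinarith
  linarith [min_le_left ε ((c - V 0) / 2)]

theorem exists_sq_le_mul_exp_neg_of_hasDerivAt_neg_sin_half {κ : ℝ} {x : ℝ → ℝ} (hκ : 0 < κ)
    (hx : ∀ t, 0 ≤ t → HasDerivAt x (-(κ * sin (x t / 2))) t) (hx₀ : |x 0| < 2 * π) :
    ∃ k > 0, ∀ t, 0 ≤ t → x t ^ 2 ≤ x 0 ^ 2 * exp (-k * t) := by
  set b := (|x 0| + 2 * π) / 2 with hb_def
  have hb₀ : 0 < b := by positivity
  have hb : b < 2 * π := by linarith
  have hsin : 0 < sin (b / 2) := sin_pos_of_pos_of_lt_pi (by positivity) (by linarith)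
  have hV : ∀ t, 0 ≤ t → HasDerivAt (fun t => x t ^ 2) (-(2 * κ * (x t * sin (x t / 2)))) t :=
    fun t ht => ((hx t ht).pow 2).congr_deriv (by ring)
  refine ⟨2 * κ * (sin (b / 2) / b), by positivity, fun t ht =>
    le_mul_exp_neg_of_hasDerivAt_le_on_sublevel (V := fun t => x t ^ 2) (c := b ^ 2)
      (by positivity) (sq_nonneg _)
      (sq_lt_sq' (by linarith [neg_abs_le (x 0)]) (by linarith [le_abs_self (x 0)])) hV
      (fun s _ hs => ?_) ht⟩
  have hsin_bound := mul_sq_le_mul_sin_half hb₀ hb.le (abs_le.2 (abs_le_of_sq_le_sq' hs hb₀.le))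
  have := mul_le_mul_of_nonneg_left hsin_bound (by positivity : 0 ≤ 2 * κ)
  linarith

/-- any differentiable solution of the reduced relative-angle dynamics
dδ/dt = −κ_ac sin((δ−δ_r)/2) on [0, ∞) starting in (δ_r − 2π, δ_r + 2π) stays in that
interval for all t ≥ 0 and converges to δ_r as t → ∞. -/
theorem stmt_7 (κac δr : ℝ) (hκac : 0 < κac)
    (δ : ℝ → ℝ)
    (hode : ∀ t : ℝ, 0 ≤ t →
      HasDerivAt δ (-(κac * Real.sin ((δ t - δr) / 2))) t)
    (hinit : δ 0 ∈ Set.Ioo (δr - 2 * Real.pi) (δr + 2 * Real.pi)) :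
    (∀ t : ℝ, 0 ≤ t → δ t ∈ Set.Ioo (δr - 2 * Real.pi) (δr + 2 * Real.pi)) ∧
    Tendsto δ atTop (nhds δr) := by
  have hδ₀ : |δ 0 - δr| < 2 * π := abs_sub_lt_iff.2 ⟨by linarith [hinit.2], by linarith [hinit.1]⟩
  obtain ⟨k, hk, hdecay⟩ := exists_sq_le_mul_exp_neg_of_hasDerivAt_neg_sin_half
    (x := fun t => δ t - δr) hκac (fun t ht => (hode t ht).sub_const δr) hδ₀
  have hbound : ∀ t, 0 ≤ t → |δ t - δr| ≤ |δ 0 - δr| := fun t ht =>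
    sq_le_sq.1 <| (hdecay t ht).trans <|
      mul_le_of_le_one_right (sq_nonneg _) (exp_le_one_iff.2 (by nlinarith))
  have hsq : Tendsto (fun t => (δ t - δr) ^ 2) atTop (nhds 0) := by
    refine squeeze_zero' (Eventually.of_forall fun t => sq_nonneg _)
      ((eventually_ge_atTop 0).mono hdecay) ?_
    simpa using (tendsto_exp_neg_atTop_nhds_zero.comp
      (tendsto_id.const_mul_atTop hk)).const_mul ((δ 0 - δr) ^ 2)
  refine ⟨fun t ht => ?_, ?_⟩
  · have := abs_sub_lt_iff.1 ((hbound t ht).trans_lt hδ₀)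
    constructor <;> linarith [this.1, this.2]
  · have habs := hsq.sqrt
    simp only [sqrt_sq_eq_abs, sqrt_zero] at habs
    simpa using (tendsto_zero_iff_abs_tendsto_zero _).2 habs |>.add_const δr
end
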